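/- arXiv:1612.04985 — 7 statements merged into one kernel-verified Lean document; each statement's English description precedes it below -/
import Mathlib

section
/- Let G be a graph on n vertices of tree-width at most w whose complement Ḡ is closed under the Bondy–Chvátal closure (for Hamiltonian paths). Then the neighborhood diversity of Ḡ is at most 2^k + k, where k = 2(w² + w). -/
/-!
In `G`, every edge has an endpoint of degree at least `(n - 1) / 2`: the closure condition on
`Gᶜ` for the non-edge `uv` says `deg u + deg v ≥ n - 1`. Tree-width at most `w` gives
`∑ deg ≤ 2nw`, since rooting the decomposition and charging each edge to the bag closest to the
root among those of one endpoint bounds the number of edges by `nw`. Hence for `n > 2^k + k` at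
most `4w ≤ k` vertices have high degree; they form a vertex cover `S` of `G`, so each vertex
outside `S` is determined up to twins by its neighbourhood, a subset of `S`. This yields at most
`2^k + k` twin classes in `G`, and twins in `G` are twins in `Gᶜ`.
-/

open SimpleGraph Finset

/-- A tree decomposition of a graph `G` on vertex type `V`, indexed by the vertices of a
tree `T` on index type `ι`: every vertex of `G` lies in some bag, both endpoints of every
edge of `G` lie in some common bag, and for every vertex `v` the set of tree nodes whose
bag contains `v` induces a (connected) subtree of `T`. -/
structure TreeDecomp {V ι : Type} (G : SimpleGraph V) (T : SimpleGraph ι) where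
  isTree : T.IsTree
  bag : ι → Finset V
  mem_bag : ∀ v : V, ∃ i : ι, v ∈ bag i
  edge_bag : ∀ u v : V, G.Adj u v → ∃ i : ι, u ∈ bag i ∧ v ∈ bag i
  subtree : ∀ v : V, (T.induce {i : ι | v ∈ bag i}).Connected

namespace SimpleGraph

variable {V : Type*} {G : SimpleGraph V}

lemma Walk.IsPath.append {u v w : V} {p : G.Walk u v} {q : G.Walk v w} (hp : p.IsPath)
    (hq : q.IsPath) (h : ∀ x ∈ p.support, x ∈ q.support → x = v) :
    (p.append q).IsPath := by
  rw [Walk.isPath_def, Walk.support_append]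
  refine hp.support_nodup.append hq.support_nodup.tail fun x hxp hxq => ?_
  have hnd := hq.support_nodup
  rw [← q.cons_tail_support] at hnd
  rw [h x hxp (List.mem_of_mem_tail hxq)] at hxq
  exact (List.nodup_cons.mp hnd).1 hxq

lemma Walk.dist_add_dist_of_mem_support {u v x : V} {p : G.Walk u v}
    (hp : p.length = G.dist u v) (hx : x ∈ p.support) :
    G.dist u x + G.dist x v = G.dist u v := by
  classical
  rw [← length_eq_dist_of_subwalk hp (p.isSubwalk_takeUntil hx),
    ← length_eq_dist_of_subwalk hp (p.isSubwalk_dropUntil hx), ← Walk.length_append,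
    p.take_spec hx, hp]

lemma exists_isPath_of_connected_induce {s : Set V} (hs : (G.induce s).Connected) {u v : V}
    (hu : u ∈ s) (hv : v ∈ s) : ∃ p : G.Walk u v, p.IsPath ∧ ∀ x ∈ p.support, x ∈ s := by
  classical
  obtain ⟨q⟩ := hs ⟨u, hu⟩ ⟨v, hv⟩
  refine ⟨q.bypass.map (Embedding.induce (G := G) s).toHom,
    q.bypass_isPath.map (Embedding.induce (G := G) s).injective, ?_⟩
  intro x hx
  replace hx : x ∈ (q.bypass.map (Embedding.induce (G := G) s).toHom).support := hx
  rw [Walk.support_map, List.mem_map] at hx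
  obtain ⟨y, -, rfl⟩ := hx
  exact y.2

lemma Connected.exists_isPath_through_closest (hG : G.Connected) {s : Set V}
    (hs : (G.induce s).Connected) {r t x : V} (ht : t ∈ s)
    (hmin : ∀ y ∈ s, G.dist t r ≤ G.dist y r) (hx : x ∈ s) :
    ∃ p : G.Walk x r, p.IsPath ∧ t ∈ p.support ∧
      ∀ y ∈ p.support, y ∈ s ∨ G.dist y r < G.dist t r := by
  obtain ⟨p, hp, hps⟩ := exists_isPath_of_connected_induce hs hx ht
  obtain ⟨q, hq, hqlen⟩ := hG.exists_path_of_dist t r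
  have hq_eq_or_lt : ∀ y ∈ q.support, y = t ∨ G.dist y r < G.dist t r := fun y hy => by
    have hsum := Walk.dist_add_dist_of_mem_support hqlen hy
    by_cases hty : G.dist t y = 0
    · exact .inl (hG.dist_eq_zero_iff.mp hty).symm
    · exact .inr (by omega)
  refine ⟨p.append q, hp.append hq fun y hyp hyq => ?_, ?_, fun y hy => ?_⟩
  · exact (hq_eq_or_lt y hyq).resolve_right (not_lt.mpr (hmin y (hps y hyp)))
  · exact (p.mem_support_append_iff q).mpr (.inr q.start_mem_support)
  · rcases (p.mem_support_append_iff q).mp hy with hy | hy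
    · exact .inl (hps y hy)
    · exact (hq_eq_or_lt y hy).imp_left fun (h : y = t) => h ▸ ht

lemma IsTree.closest_mem_of_inter_nonempty (hG : G.IsTree) {r : V} {s₁ s₂ : Set V}
    (hs₁ : (G.induce s₁).Connected) (hs₂ : (G.induce s₂).Connected) {i t₁ t₂ : V}
    (hi₁ : i ∈ s₁) (hi₂ : i ∈ s₂) (ht₁ : t₁ ∈ s₁) (ht₂ : t₂ ∈ s₂)
    (hmin₁ : ∀ y ∈ s₁, G.dist t₁ r ≤ G.dist y r) (hmin₂ : ∀ y ∈ s₂, G.dist t₂ r ≤ G.dist y r)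
    (hle : G.dist t₁ r ≤ G.dist t₂ r) : t₂ ∈ s₁ := by
  obtain ⟨p₁, hp₁, -, hp₁s⟩ := hG.connected.exists_isPath_through_closest hs₁ ht₁ hmin₁ hi₁
  obtain ⟨p₂, hp₂, ht₂p₂, -⟩ := hG.connected.exists_isPath_through_closest hs₂ ht₂ hmin₂ hi₂
  have hp : p₁ = p₂ :=
    congrArg Subtype.val ((hG.isAcyclic.subsingleton_path i r).elim ⟨p₁, hp₁⟩ ⟨p₂, hp₂⟩)
  subst hp
  exact (hp₁s t₂ ht₂p₂).resolve_right (not_lt.mpr hle)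

lemma sum_degree_le_of_forall_adj [Fintype V] [DecidableRel G.Adj] (L : V → Finset V)
    (hL : ∀ u v, G.Adj u v → u ∈ L v ∨ v ∈ L u) :
    ∑ v, G.degree v ≤ 2 * ∑ v, #(L v) := by
  classical
  have hdeg : ∀ v, G.degree v ≤ #(L v) + #(univ.bipartiteBelow (fun u v => v ∈ L u) v) :=
    fun v => by
      refine (card_le_card fun u hu => ?_).trans (card_union_le _ _)
      rw [mem_neighborFinset] at hu
      simpa [bipartiteBelow] using hL u v hu.symm
  have hdouble : ∑ v, #(univ.bipartiteBelow (fun u v => v ∈ L u) v) = ∑ v, #(L v) := by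
    rw [← sum_card_bipartiteAbove_eq_sum_card_bipartiteBelow]
    simp [bipartiteAbove]
  calc ∑ v, G.degree v
      ≤ ∑ v, (#(L v) + #(univ.bipartiteBelow (fun u v => v ∈ L u) v)) :=
        sum_le_sum fun v _ => hdeg v
    _ = 2 * ∑ v, #(L v) := by rw [sum_add_distrib, hdouble, two_mul]

lemma card_le_degree_add_degree_add_one [DecidableEq V] [Fintype V] [DecidableRel G.Adj]
    (hclosed : ∀ u v : V, u ≠ v → ¬ Gᶜ.Adj u v → Gᶜ.degree u + Gᶜ.degree v < Fintype.card V)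
    {u v : V} (h : G.Adj u v) : Fintype.card V ≤ G.degree u + G.degree v + 1 := by
  have hsum := hclosed u v h.ne fun hc => ((compl_adj G u v).mp hc).2 h
  rw [degree_compl, degree_compl] at hsum
  have := G.degree_lt_card_verts u
  have := G.degree_lt_card_verts v
  omega

lemma card_filter_le_of_sum_degree_le [Fintype V] [DecidableRel G.Adj] {w : ℕ}
    (hsum : ∑ v, G.degree v ≤ 2 * (Fintype.card V * w)) (hn : 4 * w + 2 ≤ Fintype.card V) :
    #{v | Fintype.card V ≤ 2 * G.degree v + 1} ≤ 4 * w := by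
  set n := Fintype.card V
  set H : Finset V := {v | n ≤ 2 * G.degree v + 1}
  have hH : #H * (n - 1) ≤ 4 * (n * w) :=
    calc #H * (n - 1) ≤ ∑ v ∈ H, 2 * G.degree v := by
          rw [← smul_eq_mul]
          exact card_nsmul_le_sum _ _ _ fun v hv => by simp only [H, mem_filter] at hv; omega
      _ ≤ ∑ v, 2 * G.degree v := sum_le_sum_of_subset (subset_univ H)
      _ ≤ 4 * (n * w) := by rw [← mul_sum]; omega
  obtain ⟨m, hm⟩ : ∃ m, n = m + 1 := ⟨n - 1, by omega⟩
  rw [hm, add_tsub_cancel_right] at hH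
  by_contra! hlt
  have : (4 * w + 1) * m ≤ #H * m := Nat.mul_le_mul_right _ hlt
  nlinarith

/-- The least number of colours of such a colouring is the neighbourhood diversity of `G`. -/
def IsTwinColoring {α : Type*} (G : SimpleGraph V) (c : V → α) : Prop :=
  ∀ u v : V, c u = c v → G.neighborSet u \ {v} = G.neighborSet v \ {u}

lemma isTwinColoring_of_injective {α : Type*} {c : V → α} (hc : Function.Injective c) :
    G.IsTwinColoring c := fun _ _ h => hc h ▸ rfl

lemma IsTwinColoring.compl {α : Type*} {c : V → α} (hc : G.IsTwinColoring c) :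
    Gᶜ.IsTwinColoring c := fun u v h => by
  have huv := hc u v h
  ext x
  have hx := congrArg (x ∈ ·) huv
  simp only [Set.mem_sdiff, mem_neighborSet, Set.mem_singleton_iff, compl_adj, eq_iff_iff]
    at hx ⊢
  by_cases hxu : x = u <;> by_cases hxv : x = v <;> simp_all [ne_comm]

lemma IsTwinColoring.exists_fin {α : Type*} [Fintype α] {c : V → α} (hc : G.IsTwinColoring c)
    {m : ℕ} (hm : Fintype.card α ≤ m) : ∃ c' : V → Fin m, G.IsTwinColoring c' := by
  obtain ⟨e⟩ := Function.Embedding.nonempty_of_card_le (hm.trans (Fintype.card_fin m).ge)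
  exact ⟨e ∘ c, fun u v h => hc u v (e.injective h)⟩

/-- Outside a vertex cover `S`, a vertex is coloured by its neighbourhood, a subset of `S`. -/
lemma exists_isTwinColoring_of_vertexCover [DecidableEq V] [Fintype V] [DecidableRel G.Adj]
    (S : Finset V) (hS : ∀ u v, G.Adj u v → u ∈ S ∨ v ∈ S) :
    ∃ c : V → S.powerset ⊕ S, G.IsTwinColoring c := by
  have hN : ∀ v ∉ S, G.neighborFinset v ∈ S.powerset := fun v hv => by
    rw [mem_powerset]
    intro u hu
    exact (hS v u ((mem_neighborFinset G v u).mp hu)).resolve_left hv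
  refine ⟨fun v => if hv : v ∈ S then .inr ⟨v, hv⟩ else .inl ⟨_, hN v hv⟩, fun u v h => ?_⟩
  by_cases hu : u ∈ S <;> by_cases hv : v ∈ S <;> simp only [hu, hv, dite_true, dite_false,
    Sum.inl.injEq, Sum.inr.injEq, reduceCtorEq, Subtype.mk.injEq] at h
  · exact h ▸ rfl
  · have hN : G.neighborSet u = G.neighborSet v :=
      Set.ext fun x => by simpa using congrArg (x ∈ ·) h
    rw [hN, Set.sdiff_singleton_eq_self G.notMem_neighborSet_self,
      Set.sdiff_singleton_eq_self (hN ▸ G.notMem_neighborSet_self)]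

end SimpleGraph

namespace TreeDecomp

variable {V ι : Type} {G : SimpleGraph V} {T : SimpleGraph ι} (D : TreeDecomp G T) (r : ι)

noncomputable def top (v : V) : ι :=
  Function.argminOn (fun i => T.dist i r) {i | v ∈ D.bag i} (D.mem_bag v)

lemma mem_bag_top (v : V) : v ∈ D.bag (D.top r v) :=
  Function.argminOn_mem _ {i | v ∈ D.bag i} _

lemma dist_top_le {v : V} {i : ι} (hi : v ∈ D.bag i) : T.dist (D.top r v) r ≤ T.dist i r :=
  Function.argminOn_le (fun i => T.dist i r) {i | v ∈ D.bag i} hi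

lemma mem_bag_top_or_mem_bag_top {u v : V} (h : G.Adj u v) :
    u ∈ D.bag (D.top r v) ∨ v ∈ D.bag (D.top r u) := by
  obtain ⟨i, hiu, hiv⟩ := D.edge_bag u v h
  rcases le_total (T.dist (D.top r u) r) (T.dist (D.top r v) r) with hle | hle
  · exact .inl (D.isTree.closest_mem_of_inter_nonempty (D.subtree u) (D.subtree v) hiu hiv
      (D.mem_bag_top r u) (D.mem_bag_top r v) (fun _ => D.dist_top_le r)
      (fun _ => D.dist_top_le r) hle)
  · exact .inr (D.isTree.closest_mem_of_inter_nonempty (D.subtree v) (D.subtree u) hiv hiu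
      (D.mem_bag_top r v) (D.mem_bag_top r u) (fun _ => D.dist_top_le r)
      (fun _ => D.dist_top_le r) hle)

lemma sum_degree_le [Fintype V] [DecidableRel G.Adj] {w : ℕ}
    (hbag : ∀ i, #(D.bag i) ≤ w + 1) : ∑ v, G.degree v ≤ 2 * (Fintype.card V * w) := by
  classical
  obtain ⟨r⟩ := D.isTree.connected.nonempty
  have hL : ∀ v, #((D.bag (D.top r v)).erase v) ≤ w := fun v => by
    rw [card_erase_of_mem (D.mem_bag_top r v)]
    have := hbag (D.top r v)
    omega
  calc ∑ v, G.degree v ≤ 2 * ∑ v, #((D.bag (D.top r v)).erase v) :=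
        sum_degree_le_of_forall_adj _ fun u v h =>
          (D.mem_bag_top_or_mem_bag_top r h).imp (mem_erase.mpr ⟨h.ne, ·⟩)
            (mem_erase.mpr ⟨h.ne.symm, ·⟩)
    _ ≤ 2 * ∑ _v : V, w := by gcongr with v; exact hL v
    _ = 2 * (Fintype.card V * w) := by simp

end TreeDecomp

/-- Let `G` be a graph on `n` vertices of tree-width at most `w` (i.e. `G`
admits a tree decomposition all of whose bags have size at most `w + 1`) whose complement
`Gᶜ` is closed under the Bondy–Chvátal closure for Hamiltonian paths (any two distinct
non-adjacent vertices `u, v` of `Gᶜ` satisfy `deg_{Gᶜ}(u) + deg_{Gᶜ}(v) < n`).  Then the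
neighborhood diversity of `Gᶜ` is at most `2^k + k` where `k = 2(w² + w)`: there is a
partition of the vertices into at most `2^k + k` classes (given by a coloring `c`) such
that any two vertices `u, v` in the same class satisfy `N(u) \ {v} = N(v) \ {u}` in `Gᶜ`. -/
theorem stmt0 {V : Type} [Fintype V] [DecidableEq V] (G : SimpleGraph V)
    [DecidableRel G.Adj] (w : ℕ)
    (htw : ∃ (ι : Type) (_ : Fintype ι) (T : SimpleGraph ι) (D : TreeDecomp G T),
      ∀ i : ι, (D.bag i).card ≤ w + 1)
    (hclosed : ∀ u v : V, u ≠ v → ¬ Gᶜ.Adj u v →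
      Gᶜ.degree u + Gᶜ.degree v < Fintype.card V) :
    ∃ c : V → Fin (2 ^ (2 * (w ^ 2 + w)) + 2 * (w ^ 2 + w)),
      ∀ u v : V, c u = c v →
        Gᶜ.neighborSet u \ {v} = Gᶜ.neighborSet v \ {u} := by
  set n := Fintype.card V
  set k := 2 * (w ^ 2 + w)
  by_cases hsmall : n ≤ 2 ^ k + k
  · exact (isTwinColoring_of_injective (G := Gᶜ) Function.injective_id).exists_fin hsmall
  obtain ⟨ι, _, T, D, hbag⟩ := htw
  set S : Finset V := {v | n ≤ 2 * G.degree v + 1}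
  have hcover : ∀ u v, G.Adj u v → u ∈ S ∨ v ∈ S := fun u v h => by
    have := card_le_degree_add_degree_add_one hclosed h
    simp only [S, mem_filter, mem_univ, true_and]
    omega
  have hk : 4 * w ≤ k := by simp only [k]; nlinarith
  have hS : #S ≤ k :=
    (card_filter_le_of_sum_degree_le (D.sum_degree_le hbag)
      (by have := Nat.one_le_two_pow (n := k); omega)).trans hk
  refine (exists_isTwinColoring_of_vertexCover S hcover).choose_spec.compl.exists_fin ?_
  simp only [Fintype.card_sum, Fintype.card_coe, card_powerset]
  gcongr
  norm_num
end

section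
/- Let G be a graph on n vertices, let w ≥ 1, and suppose G has a tree decomposition of width at most w with at most n bags. Then the number of vertices v of G with 2·deg_G(v) ≥ n is at most 2(w² + w). -/
/-- Let `G` be a graph on `n` vertices, let `w ≥ 1`, and suppose `G` has a
tree decomposition of width at most `w` (all bags of size at most `w + 1`) with at most
`n` bags.  Then the number of vertices `v` of `G` with `2·deg_G(v) ≥ n` is at most
`2(w² + w)`. -/
theorem stmt5 {V ι : Type} [Fintype V] [Fintype ι] [DecidableEq V]
    (G : SimpleGraph V) [DecidableRel G.Adj] (T : SimpleGraph ι)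
    (w : ℕ) (hw : 1 ≤ w) (D : TreeDecomp G T)
    (hwidth : ∀ i : ι, (D.bag i).card ≤ w + 1)
    (hbags : Fintype.card ι ≤ Fintype.card V) :
    (Finset.univ.filter fun v : V => Fintype.card V ≤ 2 * G.degree v).card
      ≤ 2 * (w ^ 2 + w) := by
  classical
  set n := Fintype.card V with hn
  set H := Finset.univ.filter fun v : V => n ≤ 2 * G.degree v with hH
  -- the set of ordered adjacent pairs
  set P := Finset.univ.filter (fun p : V × V => G.Adj p.1 p.2) with hPdef
  have hP : P.card = ∑ u : V, G.degree u := by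
    rw [hPdef, Finset.card_filter, Fintype.sum_prod_type]
    refine Finset.sum_congr rfl fun u _ => ?_
    rw [← Finset.card_filter, ← SimpleGraph.neighborFinset_eq_filter]
    rfl
  -- every adjacent pair lies in the offDiag of some bag
  have hsub : P ⊆ Finset.univ.biUnion (fun i : ι => (D.bag i).offDiag) := by
    intro p hp
    rw [hPdef, Finset.mem_filter] at hp
    obtain ⟨i, h1, h2⟩ := D.edge_bag p.1 p.2 hp.2
    refine Finset.mem_biUnion.2 ⟨i, Finset.mem_univ i, ?_⟩
    exact Finset.mem_offDiag.2 ⟨h1, h2, hp.2.ne⟩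
  have hcard : P.card ≤ Fintype.card ι * ((w + 1) * w) := by
    calc P.card ≤ (Finset.univ.biUnion (fun i : ι => (D.bag i).offDiag)).card :=
          Finset.card_le_card hsub
      _ ≤ ∑ i : ι, (D.bag i).offDiag.card := Finset.card_biUnion_le
      _ ≤ ∑ _i : ι, (w + 1) * w := by
          refine Finset.sum_le_sum fun i _ => ?_
          rw [Finset.offDiag_card]
          have h := hwidth i
          calc (D.bag i).card * (D.bag i).card - (D.bag i).card
              = (D.bag i).card * ((D.bag i).card - 1) := by
                cases (D.bag i).card with
                | zero => simp
                | succ m => simp [Nat.succ_sub_one, Nat.mul_succ]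
            _ ≤ (w + 1) * w := Nat.mul_le_mul h (by omega)
      _ = Fintype.card ι * ((w + 1) * w) := by
          rw [Finset.sum_const, Finset.card_univ, smul_eq_mul]
  have hmain : H.card * n ≤ n * (2 * (w ^ 2 + w)) := by
    calc H.card * n ≤ ∑ v ∈ H, 2 * G.degree v := by
          rw [← smul_eq_mul]
          exact Finset.card_nsmul_le_sum H _ n
            (fun v hv => (Finset.mem_filter.1 hv).2)
      _ ≤ ∑ v : V, 2 * G.degree v :=
          Finset.sum_le_sum_of_subset (Finset.filter_subset _ _)
      _ = 2 * P.card := by rw [hP, Finset.mul_sum]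
      _ ≤ 2 * (Fintype.card ι * ((w + 1) * w)) := by omega
      _ ≤ 2 * (n * ((w + 1) * w)) :=
          Nat.mul_le_mul_left 2 (Nat.mul_le_mul_right _ hbags)
      _ = n * (2 * (w ^ 2 + w)) := by ring
  rcases Nat.eq_zero_or_pos n with h0 | h0
  · have : H ⊆ Finset.univ := Finset.filter_subset _ _
    have := Finset.card_le_card this
    simp only [Finset.card_univ, ← hn, h0] at this
    omega
  · rw [mul_comm n _] at hmain
    exact Nat.le_of_mul_le_mul_right hmain h0
end

section
/- Let G be a graph and suppose there is a set S of at most t vertices of G such that the vertices outside S are pairwise adjacent in G (i.e., deleting S leaves a clique). Then the neighborhood diversity of G is at most 2^t + t. -/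
/-- Let `G` be a graph and suppose there is a set `S` of at most `t` vertices
of `G` such that the vertices outside `S` are pairwise adjacent in `G` (deleting `S`
leaves a clique).  Then the neighborhood diversity of `G` is at most `2^t + t`: there is a
partition of the vertices into at most `2^t + t` classes (given by a coloring `c`) such
that any two vertices `u, v` in the same class satisfy `N(u) \ {v} = N(v) \ {u}`. -/
theorem stmt6 {V : Type} [Fintype V] [DecidableEq V] (G : SimpleGraph V) (t : ℕ)
    (S : Finset V) (hS : S.card ≤ t)
    (hclique : ∀ u v : V, u ∉ S → v ∉ S → u ≠ v → G.Adj u v) :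
    ∃ c : V → Fin (2 ^ t + t),
      ∀ u v : V, c u = c v →
        G.neighborSet u \ {v} = G.neighborSet v \ {u} := by
  classical
  -- the "type" of a vertex
  set f : V → (Finset V ⊕ V) := fun v =>
    if v ∈ S then Sum.inr v else Sum.inl (S.filter (G.Adj v)) with hf
  -- the image of f is small
  have himg : (Finset.univ.image f) ⊆
      (S.powerset.image Sum.inl) ∪ (S.image Sum.inr) := by
    intro x hx
    simp only [Finset.mem_image, Finset.mem_univ, true_and] at hx
    obtain ⟨v, rfl⟩ := hx
    by_cases hv : v ∈ S
    · simp [hf, hv]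
    · simp only [hf, hv, if_false]
      refine Finset.mem_union_left _ ?_
      exact Finset.mem_image_of_mem _ (by simp [Finset.mem_powerset, Finset.filter_subset])
  have hcard : (Finset.univ.image f).card ≤ 2 ^ t + t := by
    calc (Finset.univ.image f).card
        ≤ ((S.powerset.image Sum.inl) ∪ (S.image Sum.inr)).card :=
          Finset.card_le_card himg
      _ ≤ (S.powerset.image Sum.inl).card + (S.image Sum.inr).card :=
          Finset.card_union_le _ _
      _ ≤ S.powerset.card + S.card :=
          Nat.add_le_add (Finset.card_image_le) (Finset.card_image_le)
      _ = 2 ^ S.card + S.card := by rw [Finset.card_powerset]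
      _ ≤ 2 ^ t + t := Nat.add_le_add (Nat.pow_le_pow_right (by norm_num) hS) hS
  -- embed the image into Fin (2^t + t)
  obtain ⟨e⟩ : Nonempty ((Finset.univ.image f : Finset (Finset V ⊕ V)) ↪ Fin (2 ^ t + t)) :=
    Function.Embedding.nonempty_of_card_le
      (by rw [Fintype.card_coe, Fintype.card_fin]; exact hcard)
  refine ⟨fun v => e ⟨f v, Finset.mem_image_of_mem f (Finset.mem_univ v)⟩, ?_⟩
  intro u v hc
  have hfuv : f u = f v := by
    exact congrArg Subtype.val (e.injective hc)
  -- key claim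
  have key : ∀ u v : V, u ∉ S → v ∉ S →
      S.filter (G.Adj u) = S.filter (G.Adj v) →
      ∀ w, w ∈ G.neighborSet u \ {v} → w ∈ G.neighborSet v \ {u} := by
    intro u v hu hv hfilt w hw
    obtain ⟨hadj, hwv⟩ := hw
    simp only [SimpleGraph.mem_neighborSet] at hadj
    have hwu : w ≠ u := hadj.ne'
    have hwv' : w ≠ v := hwv
    refine ⟨?_, hwu⟩
    simp only [SimpleGraph.mem_neighborSet]
    by_cases hwS : w ∈ S
    · have : w ∈ S.filter (G.Adj u) := Finset.mem_filter.mpr ⟨hwS, hadj⟩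
      rw [hfilt] at this
      exact (Finset.mem_filter.mp this).2
    · exact (hclique w v hwS hv hwv').symm
  by_cases hu : u ∈ S <;> by_cases hv : v ∈ S <;> simp only [hf, hu, hv, if_true, if_false] at hfuv
  · -- both in S: u = v
    cases hfuv; rfl
  · exact absurd hfuv (by simp)
  · exact absurd hfuv (by simp)
  · have hfilt : S.filter (G.Adj u) = S.filter (G.Adj v) := Sum.inl.inj hfuv
    ext w
    constructor
    · exact key u v hu hv hfilt w
    · exact key v u hv hu hfilt.symm w
end

section
/- (Bondy–Chvátal closure theorem for Hamiltonian paths.) Let G = (V, E) be a graph with |V| ≥ 3 and let u and v be distinct non-adjacent vertices of G such that deg_G(u) + deg_G(v) ≥ |V|. Then G has a Hamiltonian path if and only if the graph (V, E ∪ {{u, v}}) obtained by adding the edge {u, v} has a Hamiltonian path. -/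
/-!
Adjoin to `G` a cone vertex joined to every vertex. A Hamiltonian path of `G ⊔ uv` that uses the
edge `uv`, closed up through the cone vertex, is a Hamiltonian cycle of the cone through `uv`.
List it as `v = q₀, …, qₙ = u`. In the cone `u` and `v` have `deg u + 1` and `deg v + 1`
neighbours, together at least `n + 2`, so by pigeonhole some `j < n` has `u ~ qⱼ` and
`v ~ qⱼ₊₁`, and `q₀ … qⱼ qₙ qₙ₋₁ … qⱼ₊₁` is a Hamiltonian cycle of the cone avoiding `uv`
(Bondy–Chvátal). Deleting the cone vertex from it leaves a Hamiltonian path of `G`.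
-/

/-- A graph has a Hamiltonian path if it has a walk visiting every vertex exactly once. -/
def HasHamiltonianPath {V : Type} [DecidableEq V] (G : SimpleGraph V) : Prop :=
  ∃ (a b : V) (p : G.Walk a b), p.IsHamiltonian

namespace List

variable {α : Type*}

theorem exists_append_cons_cons_of_length_tail_lt {p q : α → Bool} :
    ∀ {l : List α}, l.tail.length < l.dropLast.countP p + l.tail.countP q →
      ∃ X a b Y, l = X ++ a :: b :: Y ∧ p a ∧ q b
  | [], h | [_], h => by simp at h
  | a :: b :: t, h => by
    by_cases hab : p a ∧ q b
    · exact ⟨[], a, b, t, rfl, hab⟩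
    have hpq : (if p a then 1 else 0) + (if q b then 1 else 0) ≤ 1 := by
      grind
    obtain ⟨X, x, y, Y, hl, hx, hy⟩ :=
      exists_append_cons_cons_of_length_tail_lt (p := p) (q := q) (l := b :: t) (by
        simp only [dropLast_cons_cons, tail_cons, length_cons, countP_cons] at h ⊢
        omega)
    rw [hl]
    exact ⟨a :: X, x, y, Y, rfl, hx, hy⟩

variable {R : α → α → Prop}

theorem IsChain.append_reverse [Std.Symm R] {l₁ l₂ : List α} (h : (l₁ ++ l₂).IsChain R)
    (hlast : ∀ x ∈ l₁.getLast?, ∀ y ∈ l₂.getLast?, R x y) : (l₁ ++ l₂.reverse).IsChain R := by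
  obtain ⟨h₁, h₂, -⟩ := isChain_append.1 h
  refine isChain_append.2 ⟨h₁, isChain_reverse.2 (h₂.imp fun _ _ => symm), ?_⟩
  simpa [head?_reverse] using hlast

theorem IsChain.append_comm {l₁ l₂ : List α} (h : (l₁ ++ l₂).IsChain R)
    (hcyc : ∀ x ∈ (l₁ ++ l₂).getLast?, ∀ y ∈ (l₁ ++ l₂).head?, R x y) :
    (l₂ ++ l₁).IsChain R := by
  obtain ⟨h₁, h₂, -⟩ := isChain_append.1 h
  refine isChain_append.2 ⟨h₂, h₁, ?_⟩
  rcases eq_or_ne l₁ [] with rfl | hl₁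
  · simp
  rcases eq_or_ne l₂ [] with rfl | hl₂
  · simp
  simpa [getLast?_append_of_ne_nil _ hl₂, head?_append_of_ne_nil _ hl₁] using hcyc

theorem Nodup.countP_eq_card_filter [Fintype α] {l : List α} (hnd : l.Nodup) (hl : ∀ x, x ∈ l)
    (p : α → Bool) : l.countP p = (Finset.univ.filter fun x => p x).card := by
  classical
  rw [countP_eq_length_filter, ← toFinset_card_of_nodup (hnd.filter p)]
  congr 1
  ext x
  simp [hl x]

theorem map_some_reduceOption {l : List (Option α)} (h : none ∉ l) :
    l.reduceOption.map some = l := by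
  rw [reduceOption, map_filterMap_some_eq_filter_map_isSome, map_id, filter_eq_self]
  intro x hx
  cases x <;> simp_all

end List

open List

namespace SimpleGraph

variable {V : Type*} (G : SimpleGraph V)

/-- The cone over `G`, with `none` as apex. The apex is also related to itself, which is harmless
since it occurs once in every list below. -/
def ConeAdj : Option V → Option V → Prop
  | some x, some y => G.Adj x y
  | none, _ | some _, none => True

instance [DecidableRel G.Adj] : DecidableRel G.ConeAdj
  | some x, some y => inferInstanceAs (Decidable (G.Adj x y))
  | none, _ | some _, none => isTrue trivial

protected theorem ConeAdj.symm {G : SimpleGraph V} :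
    ∀ {x y : Option V}, G.ConeAdj x y → G.ConeAdj y x
  | some _, some _, h => G.adj_symm h
  | none, none, _ | none, some _, _ | some _, none, _ => trivial

instance : Std.Symm G.ConeAdj := ⟨fun _ _ => ConeAdj.symm⟩

theorem countP_coneAdj [Fintype V] [DecidableRel G.Adj] {L : List V} (hnd : L.Nodup)
    (hL : ∀ x, x ∈ L) {Q : List (Option V)} (hQ : Q ~ none :: L.map some) (w : V) :
    Q.countP (G.ConeAdj (some w)) = G.degree w + 1 := by
  have hfun : (fun x => decide (G.ConeAdj (some w) x)) ∘ some = fun x => decide (G.Adj w x) := rfl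
  rw [hQ.countP_eq, countP_cons, countP_map, hfun, hnd.countP_eq_card_filter hL,
    ← card_neighborFinset_eq_degree, neighborFinset_eq_filter]
  simp [ConeAdj]
  rfl

theorem exists_hamiltonian_list_of_cone_cycle {L : List V} (hnd : L.Nodup) (hL : ∀ x, x ∈ L)
    {C : List (Option V)} (hC : C ~ none :: L.map some) (hchain : C.IsChain G.ConeAdj)
    (hcyc : ∀ x ∈ C.getLast?, ∀ y ∈ C.head?, G.ConeAdj x y) :
    ∃ l : List V, l.Nodup ∧ (∀ x, x ∈ l) ∧ l.IsChain G.Adj := by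
  obtain ⟨C₁, C₂, rfl⟩ := append_of_mem (hC.mem_iff.2 mem_cons_self)
  have hD : C₂ ++ C₁ ~ L.map some :=
    (perm_cons none).1 ((perm_append_comm.cons none).trans (perm_middle.symm.trans hC))
  have hnone : none ∉ C₂ ++ C₁ := fun h => by
    obtain ⟨x, -, hx⟩ := mem_map.1 (hD.mem_iff.1 h)
    exact Option.some_ne_none x hx
  have hchain' : (C₂ ++ C₁).IsChain G.ConeAdj := (hchain.append_comm hcyc).tail
  rw [← map_some_reduceOption hnone] at hD hchain'
  refine ⟨(C₂ ++ C₁).reduceOption, ?_, fun x => ?_, ?_⟩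
  · exact (hD.nodup_iff.2 (hnd.map (Option.some_injective V))).of_map some
  · simpa using hD.mem_iff.2 (mem_map_of_mem (hL x))
  · exact (isChain_map some).1 hchain'

theorem exists_hamiltonian_list_of_isChain_split [Fintype V] [DecidableRel G.Adj] {u v : V}
    (hdeg : Fintype.card V ≤ G.degree u + G.degree v) {X Y : List V}
    (hnd : (X ++ u :: v :: Y).Nodup) (hmem : ∀ x, x ∈ X ++ u :: v :: Y)
    (hX : (X ++ [u]).IsChain G.Adj) (hY : (v :: Y).IsChain G.Adj) :
    ∃ l : List V, l.Nodup ∧ (∀ x, x ∈ l) ∧ l.IsChain G.Adj := by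
  -- the Hamiltonian cycle of the cone, opened at the edge `uv`
  set Q : List (Option V) := (v :: Y).map some ++ none :: (X ++ [u]).map some with hQ
  have hQu : Q = ((v :: Y).map some ++ none :: X.map some) ++ [some u] := by simp [hQ]
  have hQperm : Q ~ none :: (X ++ u :: v :: Y).map some := by
    refine perm_middle.trans (Perm.cons _ ?_)
    rw [← map_append]
    exact (perm_append_comm.trans (by simp)).map some
  have hQchain : Q.IsChain G.ConeAdj := by
    refine isChain_append.2 ⟨(isChain_map some).2 hY,
      isChain_cons.2 ⟨fun _ _ => trivial, (isChain_map some).2 hX⟩, ?_⟩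
    rintro x - _ ⟨⟩
    cases x <;> trivial
  have hcount : Q.tail.length < Q.dropLast.countP (G.ConeAdj (some u)) +
      Q.tail.countP (G.ConeAdj (some v)) := by
    have hu := G.countP_coneAdj hnd hmem hQperm u
    have hv := G.countP_coneAdj hnd hmem hQperm v
    have hlen : (X ++ u :: v :: Y).length = Fintype.card V := by
      simpa using hnd.countP_eq_card_filter hmem (fun _ => true)
    have hQv : Q = some v :: (Y.map some ++ none :: (X ++ [u]).map some) := rfl
    have hdrop : Q.dropLast = (v :: Y).map some ++ none :: X.map some := by
      rw [hQu, dropLast_concat]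
    rw [hQu, countP_append] at hu
    rw [hQv, countP_cons] at hv
    rw [hdrop, hQv, tail_cons]
    simp [ConeAdj] at hu hv hlen ⊢
    omega
  obtain ⟨A, a, b, B, hAB, hua, hvb⟩ := exists_append_cons_cons_of_length_tail_lt hcount
  have hQ₂ : Q = (A ++ [a]) ++ b :: B := by simp [hAB]
  have hlast : (b :: B).getLast? = some (some u) := by
    rw [← getLast?_append_of_ne_nil _ (cons_ne_nil b B), ← hQ₂, hQu, getLast?_concat]
  have hhead : ((A ++ [a]) ++ (b :: B).reverse).head? = Q.head? := by
    rw [hQ₂]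
    simp
  have hua' : G.ConeAdj a (some u) := (of_decide_eq_true hua).symm
  have hvb' : G.ConeAdj b (some v) := (of_decide_eq_true hvb).symm
  exact G.exists_hamiltonian_list_of_cone_cycle hnd hmem
    ((reverse_perm _).append_left _ |>.trans (hQ₂ ▸ hQperm))
    ((hQ₂ ▸ hQchain).append_reverse (by simpa [hlast] using hua')) (by
      rw [hhead, getLast?_append_of_ne_nil _ (by simp), getLast?_reverse]
      simpa [hQ] using hvb')

theorem Adj.of_sup_edge_of_ne {G : SimpleGraph V} {s t x y : V} (h : (G ⊔ edge s t).Adj x y)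
    (hx : x ≠ t) (hy : y ≠ t) : G.Adj x y := by
  grind

theorem exists_hamiltonian_list_of_isChain_sup_edge [Fintype V] [DecidableRel G.Adj] {u v : V}
    (hdeg : Fintype.card V ≤ G.degree u + G.degree v) {l : List V} (hnd : l.Nodup)
    (hmem : ∀ x, x ∈ l) (hl : l.IsChain (G ⊔ edge u v).Adj) :
    ∃ l' : List V, l'.Nodup ∧ (∀ x, x ∈ l') ∧ l'.IsChain G.Adj := by
  by_cases hG : l.IsChain G.Adj
  · exact ⟨l, hnd, hmem, hG⟩
  obtain ⟨a, b, X, Y, rfl, hab⟩ : ∃ a b X Y, l = X ++ a :: b :: Y ∧ ¬ G.Adj a b := by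
    simpa [isChain_iff_forall_rel_of_append_cons_cons] using hG
  obtain ⟨hbX, haY⟩ : b ∉ X ++ [a] ∧ a ∉ b :: Y := by grind
  obtain ⟨hX, hab_sup, hY⟩ := isChain_append_cons_cons.1 hl
  obtain ⟨hedge, hdeg'⟩ :
      edge u v = edge a b ∧ Fintype.card V ≤ G.degree a + G.degree b := by
    rcases ((edge_adj ..).1 (((sup_adj ..).1 hab_sup).resolve_left hab)).1 with
      ⟨rfl, rfl⟩ | ⟨rfl, rfl⟩
    exacts [⟨rfl, hdeg⟩, ⟨edge_comm .., by omega⟩]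
  rw [hedge] at hX hY
  refine G.exists_hamiltonian_list_of_isChain_split hdeg' hnd hmem
    (hX.imp_of_mem_imp ?_) (hY.imp_of_mem_imp ?_)
  · exact fun x y hx hy h => h.of_sup_edge_of_ne (ne_of_mem_of_not_mem hx hbX)
      (ne_of_mem_of_not_mem hy hbX)
  · rw [edge_comm]
    exact fun x y hx hy h => h.of_sup_edge_of_ne (ne_of_mem_of_not_mem hx haY)
      (ne_of_mem_of_not_mem hy haY)

end SimpleGraph

open SimpleGraph

theorem hasHamiltonianPath_iff_exists_list {V : Type} [DecidableEq V] [Nonempty V]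
    (G : SimpleGraph V) :
    HasHamiltonianPath G ↔ ∃ l : List V, l.Nodup ∧ (∀ x, x ∈ l) ∧ l.IsChain G.Adj := by
  refine ⟨fun ⟨_, _, p, hp⟩ => ⟨p.support, hp.isPath.support_nodup, hp.mem_support,
    p.isChain_adj_support⟩, fun ⟨l, hnd, hmem, hl⟩ => ?_⟩
  have hne : l ≠ [] := ne_nil_of_mem (hmem (Classical.arbitrary V))
  refine ⟨_, _, Walk.ofSupport l hne hl, fun x => ?_⟩
  rw [Walk.support_ofSupport]
  exact count_eq_one_of_mem hnd (hmem x)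

theorem stmt7_general {V : Type} [Fintype V] [DecidableEq V] (G : SimpleGraph V)
    [DecidableRel G.Adj]
    (u v : V)
    (hdeg : Fintype.card V ≤ G.degree u + G.degree v) :
    HasHamiltonianPath G ↔
      HasHamiltonianPath (G ⊔ SimpleGraph.fromEdgeSet {s(u, v)}) := by
  have : Nonempty V := ⟨u⟩
  rw [hasHamiltonianPath_iff_exists_list, hasHamiltonianPath_iff_exists_list]
  exact ⟨fun ⟨l, hnd, hmem, hl⟩ => ⟨l, hnd, hmem, hl.imp fun _ _ h => Or.inl h⟩,
    fun ⟨l, hnd, hmem, hl⟩ => G.exists_hamiltonian_list_of_isChain_sup_edge hdeg hnd hmem hl⟩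

/-- Bondy–Chvátal closure theorem for Hamiltonian paths: Let `G = (V, E)` be
a graph with `|V| ≥ 3` and let `u` and `v` be distinct non-adjacent vertices of `G` with
`deg_G(u) + deg_G(v) ≥ |V|`.  Then `G` has a Hamiltonian path if and only if the graph
`(V, E ∪ {{u, v}})` obtained by adding the edge `{u, v}` has a Hamiltonian path. -/
theorem stmt7 {V : Type} [Fintype V] [DecidableEq V] (G : SimpleGraph V)
    [DecidableRel G.Adj] (h3 : 3 ≤ Fintype.card V)
    (u v : V) (huv : u ≠ v) (hadj : ¬ G.Adj u v)
    (hdeg : Fintype.card V ≤ G.degree u + G.degree v) :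
    HasHamiltonianPath G ↔
      HasHamiltonianPath (G ⊔ SimpleGraph.fromEdgeSet {s(u, v)}) :=
  stmt7_general G u v hdeg
end

section
/- Let G = (V, E) be a graph with |V| ≥ 3 and let G' be any graph obtained from G by repeatedly adding an edge between two distinct non-adjacent vertices u, v satisfying deg(u) + deg(v) ≥ |V| in the current graph (finitely many such additions, in any order). Then G has a Hamiltonian path if and only if G' has a Hamiltonian path. -/
/-- One step of the Bondy–Chvátal closure operation (for Hamiltonian paths): `H'` is
obtained from `H` by adding an edge between two distinct non-adjacent vertices `u, v`
whose degree sum in the current graph `H` is at least the number of vertices. -/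
def BondyChvatalStep {V : Type} [Fintype V] (H H' : SimpleGraph V) : Prop :=
  ∃ u v : V, u ≠ v ∧ ¬ H.Adj u v ∧
    Fintype.card V ≤ (H.neighborSet u).ncard + (H.neighborSet v).ncard ∧
    H' = H ⊔ SimpleGraph.fromEdgeSet {s(u, v)}

/-!
Adding edges preserves Hamiltonian paths, so the work is the converse for one step
`H ↦ H ⊔ edge u v` with `deg u + deg v ≥ n`. A Hamiltonian path of `H ⊔ edge u v` through the new
edge splits into two paths of `H`, `x₀ … x_k = u` and `v = x_{k+1} … x_{n-1}`. If for some cut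
position `j` the vertex `x_{j-1}` is a neighbour of `u` (or `j = 0`) and `x_j` is a neighbour of
`v` (or `j = n`), then reversing the segment between the cut and the edge `uv` gives a Hamiltonian
path of `H`. Otherwise `{i + 1 | x_i ∼ u}` and `{i | x_i ∼ v}` are disjoint subsets of
`{1, …, n - 1}`, so `deg u + deg v ≤ n - 1`.
-/

namespace List

variable {α : Type*} {R : α → α → Prop} [Std.Symm R]

theorem IsChain.append_reverse_append {a b c : List α}
    (ha : IsChain R a) (hb : IsChain R b) (hc : IsChain R c) (hb₀ : b ≠ [])
    (hab : ∀ x ∈ a.getLast?, ∀ y ∈ b.getLast?, R x y)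
    (hbc : ∀ x ∈ b.head?, ∀ y ∈ c.head?, R x y) :
    IsChain R (a ++ b.reverse ++ c) := by
  have hbr : IsChain R b.reverse := isChain_reverse.mpr (hb.imp fun x y h => Std.Symm.symm x y h)
  refine isChain_append.mpr ⟨isChain_append.mpr ⟨ha, hbr, by simpa using hab⟩, hc, ?_⟩
  rw [getLast?_append_of_ne_nil _ (reverse_ne_nil_iff.mpr hb₀), getLast?_reverse]
  exact hbc

theorem exists_isChain_perm_append_of_take_drop {P Q : List α} {u v : α}
    (hP : IsChain R P) (hQ : IsChain R Q) (hu : P.getLast? = some u) (hv : Q.head? = some v)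
    {j : ℕ} (hj : j ≠ P.length)
    (hju : ∀ x ∈ ((P ++ Q).take j).getLast?, R x u)
    (hjv : ∀ y ∈ ((P ++ Q).drop j).head?, R v y) :
    ∃ l, l ~ P ++ Q ∧ IsChain R l := by
  rcases Nat.lt_or_gt_of_ne hj with hj | hj
  · have hne : P.drop j ≠ [] := by simpa using hj
    rw [take_append_of_le_length hj.le] at hju
    rw [drop_append_of_le_length hj.le, head?_append_of_ne_nil _ hne] at hjv
    refine ⟨P.take j ++ (P.drop j).reverse ++ Q, ?_, ?_⟩
    · calc P.take j ++ (P.drop j).reverse ++ Q ~ P.take j ++ P.drop j ++ Q :=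
            ((reverse_perm _).append_left _).append_right Q
        _ = P ++ Q := by rw [take_append_drop]
    · refine (hP.take j).append_reverse_append (hP.drop j) hQ hne ?_ ?_
      · simpa [getLast?_drop, hj, hu] using hju
      · simpa [hv] using fun x hx => Std.Symm.symm _ _ (hjv x hx)
  · set t := j - P.length
    have ht : t ≠ 0 := by omega
    have hne : Q.take t ≠ [] := by
      rw [← isSome_head?, head?_take, if_neg ht, hv]; rfl
    rw [take_append, take_of_length_le (by omega)] at hju
    rw [drop_append, drop_of_length_le hj.le, nil_append] at hjv
    refine ⟨P ++ (Q.take t).reverse ++ Q.drop t, ?_, ?_⟩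
    · calc P ++ (Q.take t).reverse ++ Q.drop t ~ P ++ Q.take t ++ Q.drop t :=
            ((reverse_perm _).append_left _).append_right _
        _ = P ++ Q := by rw [append_assoc, take_append_drop]
    · refine hP.append_reverse_append (hQ.take t) (hQ.drop t) hne ?_ ?_
      · rw [getLast?_append_of_ne_nil _ hne] at hju
        simpa [hu] using fun y hy => Std.Symm.symm _ _ (hju y hy)
      · simpa [head?_take, ht, hv] using hjv

end List

namespace SimpleGraph

variable {V : Type*} {H : SimpleGraph V}

def IsHamiltonianList (H : SimpleGraph V) (l : List V) : Prop :=
  l.IsChain H.Adj ∧ l.Nodup ∧ ∀ x, x ∈ l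

theorem isChain_adj_of_isChain_sup_edge {l : List V} {u v : V}
    (hl : l.IsChain (H ⊔ edge u v).Adj) (h : u ∉ l ∨ v ∉ l) : l.IsChain H.Adj :=
  hl.imp_of_mem_imp fun a b ha hb hab => hab.resolve_right fun he => by
    rw [edge_adj] at he
    rcases he with ⟨⟨rfl, rfl⟩ | ⟨rfl, rfl⟩, -⟩ <;> tauto

theorem exists_append_of_isChain_sup_edge [DecidableEq V] {l : List V} {u v : V}
    (hl : l.IsChain (H ⊔ edge u v).Adj) (hnd : l.Nodup) (hH : ¬ l.IsChain H.Adj) :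
    ∃ P Q a b, l = P ++ Q ∧ P.getLast? = some a ∧ Q.head? = some b ∧ s(a, b) = s(u, v) ∧
      P.IsChain H.Adj ∧ Q.IsChain H.Adj := by
  obtain ⟨i, hi, hbad⟩ : ∃ i, ∃ hi : i + 1 < l.length, ¬ H.Adj l[i] l[i + 1] := by
    simpa [List.isChain_iff_getElem] using hH
  have hedge := (List.isChain_iff_getElem.mp hl i hi).resolve_left hbad
  rw [edge_adj] at hedge
  have hsym : s(l[i], l[i + 1]) = s(u, v) := Sym2.eq_iff.mpr hedge.1
  have ha : (l.take (i + 1)).getLast? = some l[i] := by simp [List.getLast?_take]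
  have hb : (l.drop (i + 1)).head? = some l[i + 1] := by simp
  have hdisj := List.disjoint_take_drop hnd (le_refl (i + 1))
  have hbP : l[i + 1] ∉ l.take (i + 1) := fun h => hdisj h (List.mem_of_mem_head? hb)
  have haQ : l[i] ∉ l.drop (i + 1) := fun h => hdisj (List.mem_of_getLast? ha) h
  refine ⟨_, _, _, _, (List.take_append_drop (i + 1) l).symm, ha, hb, hsym,
    isChain_adj_of_isChain_sup_edge (hl.take _) ?_, isChain_adj_of_isChain_sup_edge (hl.drop _) ?_⟩
  · rcases hedge.1 with ⟨-, rfl⟩ | ⟨-, rfl⟩ <;> tauto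
  · rcases hedge.1 with ⟨rfl, -⟩ | ⟨rfl, -⟩ <;> tauto

theorem exists_isHamiltonianList_of_take_drop [DecidableEq V] {u v : V} {P Q : List V}
    (hP : P.IsChain H.Adj) (hQ : Q.IsChain H.Adj)
    (hu : P.getLast? = some u) (hv : Q.head? = some v)
    (hnd : (P ++ Q).Nodup) (hall : ∀ x, x ∈ P ++ Q) {j : ℕ}
    (hju : ∀ x ∈ ((P ++ Q).take j).getLast?, H.Adj x u)
    (hjv : ∀ y ∈ ((P ++ Q).drop j).head?, H.Adj v y) :
    ∃ l, H.IsHamiltonianList l := by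
  have : Std.Symm H.Adj := H.symm
  have hj : j ≠ P.length := by
    rintro rfl
    simp [hu] at hju
  obtain ⟨l, hperm, hch⟩ := List.exists_isChain_perm_append_of_take_drop hP hQ hu hv hj hju hjv
  exact ⟨l, hch, hperm.nodup_iff.mpr hnd, fun x => hperm.mem_iff.mpr (hall x)⟩

theorem exists_isHamiltonianList_of_append [Fintype V] [DecidableEq V] {u v : V}
    {P Q : List V} (hP : P.IsChain H.Adj) (hQ : Q.IsChain H.Adj)
    (hu : P.getLast? = some u) (hv : Q.head? = some v)
    (hnd : (P ++ Q).Nodup) (hall : ∀ x, x ∈ P ++ Q)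
    (hdeg : Fintype.card V ≤ (H.neighborSet u).ncard + (H.neighborSet v).ncard) :
    ∃ l, H.IsHamiltonianList l := by
  by_contra hno
  set l := P ++ Q
  have hcut : ∀ j, (∀ x ∈ (l.take j).getLast?, H.Adj x u) →
      (∀ y ∈ (l.drop j).head?, H.Adj v y) → False := fun _ hju hjv =>
    hno (exists_isHamiltonianList_of_take_drop hP hQ hu hv hnd hall hju hjv)
  have hlast : ∀ x, (l.take (l.idxOf x + 1)).getLast? = some x := by
    simp [List.getLast?_take, hall]
  have hhead : ∀ x, (l.drop (l.idxOf x)).head? = some x := by simp [hall]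
  have hinj : Function.Injective l.idxOf := fun x y h => (List.idxOf_inj (hall x)).mp h
  set A := (l.idxOf · + 1) '' H.neighborSet u
  set B := l.idxOf '' H.neighborSet v
  have hA : A ⊆ Set.Ioo 0 l.length := by
    rintro _ ⟨x, hx, rfl⟩
    refine ⟨Nat.succ_pos _, lt_of_le_of_ne (List.idxOf_lt_length_iff.mpr (hall x)) fun he => ?_⟩
    exact hcut (l.idxOf x + 1) (by simpa [hlast] using hx.symm) (by simp [he])
  have hB : B ⊆ Set.Ioo 0 l.length := by
    rintro _ ⟨y, hy, rfl⟩
    refine ⟨Nat.pos_of_ne_zero fun he => hcut 0 (by simp) (by simpa [← he, hhead] using hy),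
      List.idxOf_lt_length_iff.mpr (hall y)⟩
  have hAB : Disjoint A B := by
    rw [Set.disjoint_left]
    rintro _ ⟨x, hx, rfl⟩ ⟨y, hy, he⟩
    exact hcut (l.idxOf x + 1) (by simpa [hlast] using hx.symm) (by simpa [← he, hhead] using hy)
  have hcard : (H.neighborSet u).ncard + (H.neighborSet v).ncard ≤ l.length - 1 := calc
    _ = A.ncard + B.ncard := by
      rw [Set.ncard_image_of_injective _ hinj,
        Set.ncard_image_of_injective _ fun x y h => hinj (Nat.succ_injective h)]
    _ = (A ∪ B).ncard := (Set.ncard_union_eq hAB).symm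
    _ ≤ (Set.Ioo 0 l.length).ncard := Set.ncard_le_ncard (Set.union_subset hA hB)
    _ = l.length - 1 := by simp
  have hlen : l.length ≤ Fintype.card V := hnd.length_le_card
  have hpos : 0 < l.length := List.length_pos_of_mem (hall u)
  omega

end SimpleGraph

open SimpleGraph

theorem hasHamiltonianPath_iff_exists_isHamiltonianList {V : Type} [DecidableEq V] [Nonempty V]
    {G : SimpleGraph V} : HasHamiltonianPath G ↔ ∃ l, G.IsHamiltonianList l := by
  constructor
  · rintro ⟨a, b, p, hp⟩
    exact ⟨p.support, p.isChain_adj_support, hp.isPath.support_nodup, hp.mem_support⟩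
  · rintro ⟨l, hc, hnd, hall⟩
    have hne : l ≠ [] := List.ne_nil_of_mem (hall (Classical.arbitrary V))
    refine ⟨_, _, Walk.ofSupport l hne hc, ?_⟩
    exact (Walk.IsPath.mk' (by simpa using hnd)).isHamiltonian_of_mem (by simpa using hall)

theorem HasHamiltonianPath.mono {V : Type} [DecidableEq V] {G H : SimpleGraph V} (h : G ≤ H)
    (hG : HasHamiltonianPath G) : HasHamiltonianPath H := by
  obtain ⟨a, b, p, hp⟩ := hG
  exact ⟨a, b, p.mapLe h, hp.map _ Function.bijective_id⟩

theorem HasHamiltonianPath.of_sup_edge {V : Type} [Fintype V] [DecidableEq V]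
    {H : SimpleGraph V} {u v : V}
    (hdeg : Fintype.card V ≤ (H.neighborSet u).ncard + (H.neighborSet v).ncard)
    (h : HasHamiltonianPath (H ⊔ edge u v)) : HasHamiltonianPath H := by
  have : Nonempty V := ⟨h.choose⟩
  rw [hasHamiltonianPath_iff_exists_isHamiltonianList] at h ⊢
  obtain ⟨l, hl, hnd, hall⟩ := h
  by_cases hH : l.IsChain H.Adj
  · exact ⟨l, hH, hnd, hall⟩
  obtain ⟨P, Q, a, b, rfl, ha, hb, hab, hP, hQ⟩ := exists_append_of_isChain_sup_edge hl hnd hH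
  refine exists_isHamiltonianList_of_append hP hQ ha hb hnd hall ?_
  rcases Sym2.eq_iff.mp hab with ⟨rfl, rfl⟩ | ⟨rfl, rfl⟩ <;> omega

theorem stmt8_general {V : Type} [Fintype V] [DecidableEq V] (G G' : SimpleGraph V)
    (hsteps : Relation.ReflTransGen BondyChvatalStep G G') :
    HasHamiltonianPath G ↔ HasHamiltonianPath G' := by
  induction hsteps with
  | refl => rfl
  | tail _ hstep ih =>
    obtain ⟨u, v, -, -, hdeg, rfl⟩ := hstep
    exact ih.trans ⟨fun h => h.mono le_sup_left, HasHamiltonianPath.of_sup_edge hdeg⟩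

/-- Let `G = (V, E)` be a graph with `|V| ≥ 3` and let `G'` be any graph
obtained from `G` by repeatedly adding an edge between two distinct non-adjacent vertices
`u, v` satisfying `deg(u) + deg(v) ≥ |V|` in the current graph (finitely many such
additions, in any order).  Then `G` has a Hamiltonian path iff `G'` has one. -/
theorem stmt8 {V : Type} [Fintype V] [DecidableEq V] (G G' : SimpleGraph V)
    (h3 : 3 ≤ Fintype.card V)
    (hsteps : Relation.ReflTransGen BondyChvatalStep G G') :
    HasHamiltonianPath G ↔ HasHamiltonianPath G' :=
  stmt8_general G G' hsteps
end

section
/- Let G be a graph on n vertices of tree-depth at most d whose complement Ḡ is closed under the Bondy–Chvátal closure (for Hamiltonian paths). Then the neighborhood diversity of Ḡ is at most 2^{2d} + 2d. -/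
/-- A rooted forest on the vertex type `V`, described by its strict ancestor relation
`anc` (`anc a v` means `a` is a proper ancestor of `v`): the relation is transitive and
irreflexive, and the ancestors of any vertex are totally ordered (form a chain).  The
depth of a vertex is its number of proper ancestors, and two vertices are adjacent in the
closure `Clos(F)` iff one is a proper ancestor of the other. -/
structure RootedForest (V : Type) where
  anc : V → V → Prop
  trans : ∀ a b c : V, anc a b → anc b c → anc a c
  irrefl : ∀ a : V, ¬ anc a a
  ancestors_chain : ∀ v a b : V, anc a v → anc b v → a = b ∨ anc a b ∨ anc b a

lemma stmt10_aux : ∀ d : ℕ, 4 * d ≤ 2 ^ (2 * d) := by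
  intro d
  induction d with
  | zero => simp
  | succ k ih =>
    have h1 : 1 ≤ 2 ^ (2 * k) := Nat.one_le_two_pow
    have h2 : 2 ^ (2 * (k + 1)) = 4 * 2 ^ (2 * k) := by ring
    omega

set_option maxHeartbeats 1000000 in
/-- Let `G` be a graph on `n` vertices of tree-depth at most `d` (there is a
rooted forest `F` of height at most `d - 1`, i.e. every vertex has fewer than `d` proper
ancestors, with `G ⊆ Clos(F)`) whose complement `Gᶜ` is closed under the Bondy–Chvátal
closure for Hamiltonian paths (any two distinct non-adjacent vertices `u, v` of `Gᶜ`
satisfy `deg_{Gᶜ}(u) + deg_{Gᶜ}(v) < n`).  Then the neighborhood diversity of `Gᶜ` is at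
most `2^(2d) + 2d`: there is a partition of the vertices into at most `2^(2d) + 2d`
classes (given by a coloring `c`) such that any two vertices `u, v` in the same class
satisfy `N(u) \ {v} = N(v) \ {u}` in `Gᶜ`. -/
theorem stmt10 {V : Type} [Fintype V] [DecidableEq V] (G : SimpleGraph V)
    [DecidableRel G.Adj] (d : ℕ)
    (htd : ∃ F : RootedForest V,
      (∀ u v : V, G.Adj u v → F.anc u v ∨ F.anc v u) ∧
      (∀ v : V, {a : V | F.anc a v}.ncard + 1 ≤ d))
    (hclosed : ∀ u v : V, u ≠ v → ¬ Gᶜ.Adj u v →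
      Gᶜ.degree u + Gᶜ.degree v < Fintype.card V) :
    ∃ c : V → Fin (2 ^ (2 * d) + 2 * d),
      ∀ u v : V, c u = c v →
        Gᶜ.neighborSet u \ {v} = Gᶜ.neighborSet v \ {u} := by
  classical
  set n := Fintype.card V with hn
  by_cases hsmall : Fintype.card V ≤ 2 ^ (2 * d) + 2 * d
  · obtain ⟨e⟩ : Nonempty (V ↪ Fin (2 ^ (2 * d) + 2 * d)) := by
      refine Function.Embedding.nonempty_of_card_le ?_
      simpa using hsmall
    refine ⟨e, fun u v huv => ?_⟩
    have : u = v := e.injective huv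
    subst this; rfl
  push_neg at hsmall
  obtain ⟨F, hF, hanc⟩ := htd
  -- ancestor and descendant finsets
  set A : V → Finset V := fun v => Finset.univ.filter (fun a => F.anc a v) with hAdef
  set D : V → Finset V := fun v => Finset.univ.filter (fun a => F.anc v a) with hDdef
  have hA : ∀ v, (A v).card + 1 ≤ d := by
    intro v
    have : {a : V | F.anc a v}.ncard = (A v).card := by
      rw [hAdef]
      rw [Set.ncard_eq_toFinset_card']
      congr 1
      ext a
      simp
    rw [← this]; exact hanc v
  have hdeg : ∀ v, G.degree v ≤ (A v).card + (D v).card := by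
    intro v
    have hsub : G.neighborFinset v ⊆ A v ∪ D v := by
      intro w hw
      rw [SimpleGraph.mem_neighborFinset] at hw
      rcases hF v w hw with h | h
      · exact Finset.mem_union_right _ (by simp [hDdef, h])
      · exact Finset.mem_union_left _ (by simp [hAdef, h])
    calc G.degree v = (G.neighborFinset v).card := rfl
      _ ≤ (A v ∪ D v).card := Finset.card_le_card hsub
      _ ≤ (A v).card + (D v).card := Finset.card_union_le _ _
  -- heavy vertices
  set Hs : Finset V := Finset.univ.filter (fun v => n ≤ 2 * G.degree v + 1) with hHdef
  -- no 3 pairwise incomparable heavy vertices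
  have key3 : ∀ u v w : V, u ∈ Hs → v ∈ Hs → w ∈ Hs → u ≠ v → u ≠ w → v ≠ w →
      ¬ F.anc u v → ¬ F.anc v u → ¬ F.anc u w → ¬ F.anc w u →
      ¬ F.anc v w → ¬ F.anc w v → False := by
    intro u v w hu hv hw huv huw hvw h1 h2 h3 h4 h5 h6
    have hDdisj : ∀ x y : V, x ≠ y → ¬ F.anc x y → ¬ F.anc y x → Disjoint (D x) (D y) := by
      intro x y hxy hxy1 hxy2
      rw [Finset.disjoint_left]
      intro z hzx hzy
      simp only [hDdef, Finset.mem_filter, Finset.mem_univ, true_and] at hzx hzy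
      rcases F.ancestors_chain z x y hzx hzy with h | h | h
      · exact hxy h
      · exact hxy1 h
      · exact hxy2 h
    have d12 := hDdisj u v huv h1 h2
    have d13 := hDdisj u w huw h3 h4
    have d23 := hDdisj v w hvw h5 h6
    have hUcard : (D u ∪ D v ∪ D w).card = (D u).card + (D v).card + (D w).card := by
      rw [Finset.card_union_of_disjoint, Finset.card_union_of_disjoint d12]
      rw [Finset.disjoint_union_left]
      exact ⟨d13, d23⟩
    have hTdisj : Disjoint ({u, v, w} : Finset V) (D u ∪ D v ∪ D w) := by
      rw [Finset.disjoint_left]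
      intro z hz hz'
      simp only [Finset.mem_insert, Finset.mem_singleton] at hz
      simp only [Finset.mem_union, hDdef, Finset.mem_filter, Finset.mem_univ, true_and] at hz'
      rcases hz with rfl | rfl | rfl <;>
        rcases hz' with (h | h) | h <;>
        first
          | exact F.irrefl _ h
          | exact h1 h | exact h2 h | exact h3 h | exact h4 h | exact h5 h | exact h6 h
    have hTcard : ({u, v, w} : Finset V).card = 3 := by
      rw [Finset.card_insert_of_notMem (by simp [huv, huw]),
        Finset.card_insert_of_notMem (by simp [hvw])]
      simp
    have htotal : 3 + ((D u).card + (D v).card + (D w).card) ≤ n := by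
      calc 3 + ((D u).card + (D v).card + (D w).card)
          = (({u, v, w} : Finset V) ∪ (D u ∪ D v ∪ D w)).card := by
            rw [Finset.card_union_of_disjoint hTdisj, hTcard, hUcard]
        _ ≤ n := Finset.card_le_univ _
    have hheavy : ∀ x : V, x ∈ Hs → n ≤ 2 * (A x).card + 2 * (D x).card + 1 := by
      intro x hx
      simp only [hHdef, Finset.mem_filter, Finset.mem_univ, true_and] at hx
      have := hdeg x
      omega
    have hu' := hheavy u hu
    have hv' := hheavy v hv
    have hw' := hheavy w hw
    have hAu := hA u
    have hAv := hA v
    have hAw := hA w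
    -- from these : n ≤ 6d - 9, contradicting hsmall
    have hle : n + 9 ≤ 6 * d := by omega
    have hp := stmt10_aux d
    omega
  -- ancestors are monotone along anc
  have hmono : ∀ x y : V, F.anc x y → (A x).card < (A y).card := by
    intro x y hxy
    refine Finset.card_lt_card ?_
    rw [Finset.ssubset_iff_of_subset]
    · exact ⟨x, by simp [hAdef, hxy], by simp [hAdef, F.irrefl x]⟩
    · intro a ha
      simp only [hAdef, Finset.mem_filter, Finset.mem_univ, true_and] at ha ⊢
      exact F.trans a x y ha hxy
  have hHcard : Hs.card ≤ 2 * d := by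
    have hfib : ∀ k ∈ Hs.image (fun v => (A v).card),
        (Hs.filter (fun v => (A v).card = k)).card ≤ 2 := by
      intro k _
      by_contra hc
      push_neg at hc
      rw [Finset.two_lt_card] at hc
      obtain ⟨a, ha, b, hb, c, hc', hab, hac, hbc⟩ := hc
      simp only [Finset.mem_filter] at ha hb hc'
      have hincomp : ∀ x y : V, x ≠ y → (A x).card = (A y).card → ¬ F.anc x y := by
        intro x y hxy hcard hxy'
        have := hmono x y hxy'
        omega
      exact key3 a b c ha.1 hb.1 hc'.1 hab hac hbc
        (hincomp a b hab (by omega)) (hincomp b a hab.symm (by omega))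
        (hincomp a c hac (by omega)) (hincomp c a hac.symm (by omega))
        (hincomp b c hbc (by omega)) (hincomp c b hbc.symm (by omega))
    have h1 : Hs.card ≤ 2 * (Hs.image (fun v => (A v).card)).card :=
      Finset.card_le_mul_card_image Hs 2 hfib
    have h2 : (Hs.image (fun v => (A v).card)).card ≤ d := by
      have : Hs.image (fun v => (A v).card) ⊆ Finset.range d := by
        intro k hk
        simp only [Finset.mem_image] at hk
        obtain ⟨v, _, rfl⟩ := hk
        simp only [Finset.mem_range]
        have := hA v
        omega
      calc (Hs.image (fun v => (A v).card)).card ≤ (Finset.range d).card :=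
            Finset.card_le_card this
        _ = d := Finset.card_range d
    omega
  -- neighbors of light vertices are heavy
  have hlight_nb : ∀ u w : V, u ∉ Hs → G.Adj u w → w ∈ Hs := by
    intro u w hu hadj
    have hne : u ≠ w := G.ne_of_adj hadj
    have hnadj : ¬ Gᶜ.Adj u w := by
      rw [SimpleGraph.compl_adj]
      rintro ⟨-, h⟩; exact h hadj
    have hcl := hclosed u w hne hnadj
    have hdu : Gᶜ.degree u = n - 1 - G.degree u := SimpleGraph.degree_compl G u
    have hdw : Gᶜ.degree w = n - 1 - G.degree w := SimpleGraph.degree_compl G w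
    have h1 : G.degree u < n := G.degree_lt_card_verts u
    have h2 : G.degree w < n := G.degree_lt_card_verts w
    simp only [hHdef, Finset.mem_filter, Finset.mem_univ, true_and] at hu ⊢
    omega
  -- light vertices with equal heavy neighborhoods have equal neighborhoods
  set f : V → (Finset {x // x ∈ Hs} ⊕ {x // x ∈ Hs}) := fun v =>
    if h : v ∈ Hs then Sum.inr ⟨v, h⟩
    else Sum.inl (Finset.univ.filter (fun w => G.Adj v w.1)) with hfdef
  obtain ⟨e⟩ : Nonempty ((Finset {x // x ∈ Hs} ⊕ {x // x ∈ Hs}) ↪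
      Fin (2 ^ (2 * d) + 2 * d)) := by
    refine Function.Embedding.nonempty_of_card_le ?_
    rw [Fintype.card_sum, Fintype.card_finset, Fintype.card_coe, Fintype.card_fin]
    have h2 : (2:ℕ) ^ Hs.card ≤ 2 ^ (2 * d) := Nat.pow_le_pow_right (by norm_num) hHcard
    omega
  refine ⟨fun v => e (f v), fun u v huv => ?_⟩
  have hf : f u = f v := e.injective huv
  by_cases hu : u ∈ Hs <;> by_cases hv : v ∈ Hs <;>
    simp only [hfdef, hu, hv, dif_pos, dif_neg, not_false_iff] at hf
  · -- both heavy: u = v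
    have : u = v := congrArg Subtype.val (Sum.inr.inj hf)
    subst this; rfl
  · exact absurd hf (by simp)
  · exact absurd hf (by simp)
  · -- both light with equal heavy neighborhoods
    have hf' : (Finset.univ.filter (fun w : {x // x ∈ Hs} => G.Adj u w.1)) =
        (Finset.univ.filter (fun w : {x // x ∈ Hs} => G.Adj v w.1)) := Sum.inl.inj hf
    have hiff : ∀ x : V, G.Adj u x ↔ G.Adj v x := by
      intro x
      constructor
      · intro h
        have hx := hlight_nb u x hu h
        have : (⟨x, hx⟩ : {x // x ∈ Hs}) ∈
            Finset.univ.filter (fun w : {x // x ∈ Hs} => G.Adj u w.1) := by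
          simp [h]
        rw [hf'] at this
        simpa using this
      · intro h
        have hx := hlight_nb v x hv h
        have : (⟨x, hx⟩ : {x // x ∈ Hs}) ∈
            Finset.univ.filter (fun w : {x // x ∈ Hs} => G.Adj v w.1) := by
          simp [h]
        rw [← hf'] at this
        simpa using this
    ext x
    simp only [Set.mem_diff, SimpleGraph.mem_neighborSet, SimpleGraph.compl_adj,
      Set.mem_singleton_iff]
    constructor
    · rintro ⟨⟨hux, hnux⟩, hxv⟩
      refine ⟨⟨?_, fun h => hnux ((hiff x).mpr h)⟩, ?_⟩
      · exact fun h => hxv h.symm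
      · exact fun h => hux h.symm
    · rintro ⟨⟨hvx, hnvx⟩, hxu⟩
      refine ⟨⟨fun h => hxu h.symm, fun h => hnvx ((hiff x).mp h)⟩, fun h => hvx h.symm⟩
end

section
/- Let G be a graph on n vertices of tree-depth at most d whose complement Ḡ is closed under the Bondy–Chvátal closure (for Hamiltonian paths). Then Ḡ has distance to clique at most 2d: there is a set S of at most 2d vertices such that the vertices outside S are pairwise adjacent in Ḡ. -/
/-- Let `G` be a graph on `n` vertices of tree-depth at most `d` (there is a
rooted forest `F` of height at most `d - 1`, i.e. every vertex has fewer than `d` proper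
ancestors, with `G ⊆ Clos(F)`) whose complement `Gᶜ` is closed under the Bondy–Chvátal
closure for Hamiltonian paths (any two distinct non-adjacent vertices `u, v` of `Gᶜ`
satisfy `deg_{Gᶜ}(u) + deg_{Gᶜ}(v) < n`).  Then `Gᶜ` has distance to clique at most `2d`:
there is a set `S` of at most `2d` vertices such that the vertices outside `S` are
pairwise adjacent in `Gᶜ`. -/
theorem stmt11 {V : Type} [Fintype V] [DecidableEq V] (G : SimpleGraph V)
    [DecidableRel G.Adj] (d : ℕ)
    (htd : ∃ F : RootedForest V,
      (∀ u v : V, G.Adj u v → F.anc u v ∨ F.anc v u) ∧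
      (∀ v : V, {a : V | F.anc a v}.ncard + 1 ≤ d))
    (hclosed : ∀ u v : V, u ≠ v → ¬ Gᶜ.Adj u v →
      Gᶜ.degree u + Gᶜ.degree v < Fintype.card V) :
    ∃ S : Finset V, S.card ≤ 2 * d ∧
      ∀ u v : V, u ∉ S → v ∉ S → u ≠ v → Gᶜ.Adj u v := by
  classical
  obtain ⟨F, hanc, hdep⟩ := htd
  set n := Fintype.card V with hn
  -- ancestors and descendants as finsets
  set A : V → Finset V := fun v => Finset.univ.filter (fun a => F.anc a v) with hA
  set D : V → Finset V := fun v => Finset.univ.filter (fun w => F.anc v w) with hD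
  have hmemA : ∀ a v : V, a ∈ A v ↔ F.anc a v := by
    intro a v; simp [hA]
  have hmemD : ∀ w v : V, w ∈ D v ↔ F.anc v w := by
    intro w v; simp [hD]
  -- depth bound in Finset form
  have hdep' : ∀ v : V, (A v).card + 1 ≤ d := by
    intro v
    have hset : {a : V | F.anc a v} = ↑(A v) := by
      ext a; simp [hmemA]
    have := hdep v
    rwa [hset, Set.ncard_coe_finset] at this
  -- degree bound via the forest
  have hdeg_le : ∀ v : V, G.degree v ≤ (A v).card + (D v).card := by
    intro v
    have hsub : G.neighborFinset v ⊆ A v ∪ D v := by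
      intro w hw
      rw [SimpleGraph.mem_neighborFinset] at hw
      rcases hanc v w hw with h | h
      · exact Finset.mem_union_right _ ((hmemD w v).2 h)
      · exact Finset.mem_union_left _ ((hmemA w v).2 h)
    calc G.degree v = (G.neighborFinset v).card := rfl
      _ ≤ (A v ∪ D v).card := Finset.card_le_card hsub
      _ ≤ (A v).card + (D v).card := Finset.card_union_le _ _
  -- adjacency in G forces a large degree sum
  have hdeg_sum : ∀ u v : V, u ≠ v → G.Adj u v →
      n ≤ G.degree u + G.degree v + 1 := by
    intro u v hne hadj
    have hnc : ¬ Gᶜ.Adj u v := by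
      rw [SimpleGraph.compl_adj]
      tauto
    have h1 := hclosed u v hne hnc
    have h2 : Gᶜ.degree u = n - 1 - G.degree u := SimpleGraph.degree_compl G u
    have h3 : Gᶜ.degree v = n - 1 - G.degree v := SimpleGraph.degree_compl G v
    have h4 : G.degree u < n := G.degree_lt_card_verts u
    have h5 : G.degree v < n := G.degree_lt_card_verts v
    omega
  -- the deletion set
  set S : Finset V := Finset.univ.filter
    (fun v => n ≤ 2 * ((A v).card + (D v).card) + 1) with hS
  have hmemS : ∀ v : V, v ∈ S ↔ n ≤ 2 * ((A v).card + (D v).card) + 1 := by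
    intro v; simp [hS]
  refine ⟨S, ?_, ?_⟩
  · -- cardinality bound
    -- minimal elements of S
    set M : Finset V := S.filter (fun m => ∀ w : V, F.anc m w → w ∉ S) with hM
    have hmemM : ∀ m : V, m ∈ M ↔ m ∈ S ∧ ∀ w : V, F.anc m w → w ∉ S := by
      intro m; simp [hM]
    -- every element of S lies above some minimal element
    have hreach : ∀ k : ℕ, ∀ v : V, (D v).card < k → v ∈ S →
        ∃ m, m ∈ M ∧ (v = m ∨ F.anc v m) := by
      intro k
      induction k with
      | zero => intro v h; omega
      | succ k ih =>
        intro v hk hvS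
        by_cases hmin : ∀ w : V, F.anc v w → w ∉ S
        · exact ⟨v, (hmemM v).2 ⟨hvS, hmin⟩, Or.inl rfl⟩
        · push_neg at hmin
          obtain ⟨w, hvw, hwS⟩ := hmin
          have hsub : D w ⊆ D v := by
            intro x hx
            exact (hmemD x v).2 (F.trans v w x hvw ((hmemD x w).1 hx))
          have hwin : w ∈ D v := (hmemD w v).2 hvw
          have hwout : w ∉ D w := fun h => F.irrefl w ((hmemD w w).1 h)
          have hlt : (D w).card < (D v).card :=
            Finset.card_lt_card ⟨hsub, fun h => hwout (h hwin)⟩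
          obtain ⟨m, hmM, hcase⟩ := ih w (by omega) hwS
          refine ⟨m, hmM, Or.inr ?_⟩
          rcases hcase with rfl | h
          · exact hvw
          · exact F.trans v w m hvw h
    -- S is covered by the ancestor-chains of minimal elements
    have hScover : S ⊆ M.biUnion (fun m => insert m (A m)) := by
      intro v hv
      obtain ⟨m, hmM, hcase⟩ := hreach ((D v).card + 1) v (by omega) hv
      rw [Finset.mem_biUnion]
      refine ⟨m, hmM, ?_⟩
      rcases hcase with rfl | h
      · exact Finset.mem_insert_self _ _
      · exact Finset.mem_insert_of_mem ((hmemA v m).2 h)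
    have hScard : S.card ≤ M.card * d := by
      calc S.card ≤ (M.biUnion (fun m => insert m (A m))).card :=
            Finset.card_le_card hScover
        _ ≤ ∑ m ∈ M, (insert m (A m)).card := Finset.card_biUnion_le
        _ ≤ ∑ _m ∈ M, d := by
            refine Finset.sum_le_sum ?_
            intro m _
            calc (insert m (A m)).card ≤ (A m).card + 1 := Finset.card_insert_le _ _
              _ ≤ d := hdep' m
        _ = M.card * d := by rw [Finset.sum_const, smul_eq_mul]
    by_cases hMc : M.card ≤ 2
    · calc S.card ≤ M.card * d := hScard
        _ ≤ 2 * d := Nat.mul_le_mul_right d hMc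
    · -- at least three minimal elements: counting argument
      push_neg at hMc
      obtain ⟨m1, hm1⟩ := Finset.card_pos.1 (by omega : 0 < M.card)
      have h2 : 0 < (M.erase m1).card := by
        rw [Finset.card_erase_of_mem hm1]; omega
      obtain ⟨m2, hm2'⟩ := Finset.card_pos.1 h2
      have h3 : 0 < ((M.erase m1).erase m2).card := by
        rw [Finset.card_erase_of_mem hm2', Finset.card_erase_of_mem hm1]; omega
      obtain ⟨m3, hm3'⟩ := Finset.card_pos.1 h3
      have hm2 : m2 ∈ M := Finset.mem_of_mem_erase hm2'
      have hm3 : m3 ∈ M := Finset.mem_of_mem_erase (Finset.mem_of_mem_erase hm3')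
      have hne12 : m1 ≠ m2 := fun h => (Finset.ne_of_mem_erase hm2') h.symm
      have hne13 : m1 ≠ m3 := fun h =>
        (Finset.ne_of_mem_erase (Finset.mem_of_mem_erase hm3')) h.symm
      have hne23 : m2 ≠ m3 := fun h => (Finset.ne_of_mem_erase hm3') h.symm
      -- disjointness of S from descendants of minimal elements
      have hSD : ∀ m : V, m ∈ M → Disjoint S (D m) := by
        intro m hm
        rw [Finset.disjoint_left]
        intro x hxS hxD
        exact ((hmemM m).1 hm).2 x ((hmemD x m).1 hxD) hxS
      -- disjointness of descendant sets of distinct minimal elements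
      have hDD : ∀ m m' : V, m ∈ M → m' ∈ M → m ≠ m' → Disjoint (D m) (D m') := by
        intro m m' hm hm' hne
        rw [Finset.disjoint_left]
        intro x hx hx'
        have h1 : F.anc m x := (hmemD x m).1 hx
        have h2 : F.anc m' x := (hmemD x m').1 hx'
        rcases F.ancestors_chain x m m' h1 h2 with h | h | h
        · exact hne h
        · exact ((hmemM m).1 hm).2 m' h ((hmemM m').1 hm').1
        · exact ((hmemM m').1 hm').2 m h ((hmemM m).1 hm).1
      -- total count
      have htot : S.card + (D m1).card + (D m2).card + (D m3).card ≤ n := by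
        have hd1 : Disjoint S (D m1) := hSD m1 hm1
        have hd2 : Disjoint (S ∪ D m1) (D m2) := by
          rw [Finset.disjoint_union_left]
          exact ⟨hSD m2 hm2, hDD m1 m2 hm1 hm2 hne12⟩
        have hd3 : Disjoint (S ∪ D m1 ∪ D m2) (D m3) := by
          rw [Finset.disjoint_union_left, Finset.disjoint_union_left]
          exact ⟨⟨hSD m3 hm3, hDD m1 m3 hm1 hm3 hne13⟩, hDD m2 m3 hm2 hm3 hne23⟩
        calc S.card + (D m1).card + (D m2).card + (D m3).card
            = (S ∪ D m1 ∪ D m2 ∪ D m3).card := by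
              rw [Finset.card_union_of_disjoint hd3, Finset.card_union_of_disjoint hd2,
                Finset.card_union_of_disjoint hd1]
          _ ≤ Finset.univ.card := Finset.card_le_univ _
          _ = n := Finset.card_univ
      have hb1 := (hmemS m1).1 ((hmemM m1).1 hm1).1
      have hb2 := (hmemS m2).1 ((hmemM m2).1 hm2).1
      have hb3 := (hmemS m3).1 ((hmemM m3).1 hm3).1
      have ha1 := hdep' m1
      have ha2 := hdep' m2
      have ha3 := hdep' m3
      omega
  · -- clique property outside S
    intro u v huS hvS hne
    rw [SimpleGraph.compl_adj]
    refine ⟨hne, fun hadj => ?_⟩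
    have h1 := hdeg_sum u v hne hadj
    have h2 := hdeg_le u
    have h3 := hdeg_le v
    have h4 : ¬ (n ≤ 2 * ((A u).card + (D u).card) + 1) := fun h => huS ((hmemS u).2 h)
    have h5 : ¬ (n ≤ 2 * ((A v).card + (D v).card) + 1) := fun h => hvS ((hmemS v).2 h)
    omega
end
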